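/- (Uniqueness of the compatibility constant, comparison form.) Suppose v¹, v² ∈ C²(ℝⁿ \ T) are bounded periodic functions and γ¹, γ² ∈ ℝ satisfy: a_{ij}(y) D_{ij}v^k(y) = f(y) in ℝⁿ \ T and b^i(y)(ξ^i + D_i v^k(y)) + γ^k = g(y) on ∂T, for k = 1,2, where (a_{ij}) is uniformly elliptic, the domain complement of the periodic hole set T is connected, and the strong maximum principle and Hopf boundary lemma hold for the operator a_{ij}D_{ij}. Then γ¹ = γ². -/

import Mathlib

/-- Second partial derivative `D_{ij} v (y)`. -/
noncomputable def sd {n : ℕ} (v : (Fin n → ℝ) → ℝ) (y : Fin n → ℝ) (i j : Fin n) : ℝ :=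
  fderiv ℝ (fun z => fderiv ℝ v z (Pi.single j (1 : ℝ))) y (Pi.single i (1 : ℝ))

/-- The complement of the closed periodic hole set `T̄ = ⋃_{m∈ℤⁿ} B̄_𝔞(m)`. -/
def Dom (n : ℕ) (𝔞 : ℝ) : Set (Fin n → ℝ) :=
  {y | ∀ m : Fin n → ℤ, 𝔞 ^ 2 < ∑ i, (y i - (m i : ℝ)) ^ 2}

/-- The boundary `∂T` of the periodic hole set. -/
def Bdy (n : ℕ) (𝔞 : ℝ) : Set (Fin n → ℝ) :=
  {y | (∃ m : Fin n → ℤ, (∑ i, (y i - (m i : ℝ)) ^ 2) = 𝔞 ^ 2) ∧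
    ∀ m : Fin n → ℤ, 𝔞 ^ 2 ≤ ∑ i, (y i - (m i : ℝ)) ^ 2}

/-!
The difference `w = v¹ - v²` is periodic, solves `a_{ij} D_{ij} w = 0` in `ℝⁿ \ T̄` and satisfies
`b · Dw = γ² - γ¹` on `∂T`. If `w` is constant on `ℝⁿ \ T̄`, then `Dw = 0` on `∂T` by continuity,
so `γ¹ = γ²`. Otherwise, by periodicity `w` attains its maximum over `ℝⁿ \ T`, and by the strong
maximum principle only at some `y₀ ∈ ∂T`, on a sphere `|y - m| = 𝔞`. There `Dw(y₀)` is normal to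
the sphere (Lagrange multipliers) and points into the hole (Hopf lemma), so obliqueness of `b`
gives `γ² - γ¹ = b · Dw(y₀) > 0`. The same argument applied to `-w` gives `γ¹ - γ² > 0`.
-/

open Set Filter Topology Finset

variable {n : ℕ}

def IntPeriodic (w : (Fin n → ℝ) → ℝ) : Prop :=
  ∀ (m : Fin n → ℤ) (y : Fin n → ℝ), w (fun i => y i + (m i : ℝ)) = w y

theorem IntPeriodic.sub {v₁ v₂ : (Fin n → ℝ) → ℝ} (h₁ : IntPeriodic v₁)
    (h₂ : IntPeriodic v₂) : IntPeriodic (v₁ - v₂) := fun m y => by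
  simp only [Pi.sub_apply, h₁ m y, h₂ m y]

theorem IntPeriodic.exists_isMaxOn {S : Set (Fin n → ℝ)} (hS : IsClosed S)
    (hS_add : ∀ y ∈ S, ∀ m : Fin n → ℤ, (fun i => y i + (m i : ℝ)) ∈ S) (hne : S.Nonempty)
    {w : (Fin n → ℝ) → ℝ} (hw : Continuous w) (hper : IntPeriodic w) :
    ∃ y₀ ∈ S, IsMaxOn w S y₀ := by
  have hcube : ∀ y ∈ S, ∃ z ∈ S ∩ Icc 0 1, w z = w y := fun y hy =>
    ⟨fun i => y i + ((-⌊y i⌋ : ℤ) : ℝ),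
      ⟨hS_add y hy _,
        fun i => by simpa [← Int.self_sub_floor] using Int.fract_nonneg (y i),
        fun i => by simpa [← Int.self_sub_floor] using (Int.fract_lt_one (y i)).le⟩,
      hper _ y⟩
  obtain ⟨z, hz, -⟩ := hcube _ hne.some_mem
  obtain ⟨y₀, hy₀, hmax⟩ :=
    (isCompact_Icc.inter_left hS).exists_isMaxOn ⟨z, hz⟩ hw.continuousOn
  refine ⟨y₀, hy₀.1, isMaxOn_iff.mpr fun y hy => ?_⟩
  obtain ⟨z, hz, hwz⟩ := hcube y hy
  exact hwz ▸ hmax hz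

def closedDom (n : ℕ) (𝔞 : ℝ) : Set (Fin n → ℝ) :=
  {y | ∀ m : Fin n → ℤ, 𝔞 ^ 2 ≤ ∑ i, (y i - (m i : ℝ)) ^ 2}

section Geometry

variable {𝔞 : ℝ}

theorem dom_union_bdy : Dom n 𝔞 ∪ Bdy n 𝔞 = closedDom n 𝔞 := by
  ext y
  refine ⟨?_, fun h => ?_⟩
  · rintro (h | h)
    exacts [fun m => (h m).le, h.2]
  · by_cases hD : y ∈ Dom n 𝔞
    · exact Or.inl hD
    · simp only [Dom, mem_ofPred_eq, not_forall, not_lt] at hD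
      obtain ⟨m, hm⟩ := hD
      exact Or.inr ⟨⟨m, le_antisymm hm (h m)⟩, h⟩

theorem dom_subset_closedDom : Dom n 𝔞 ⊆ closedDom n 𝔞 :=
  dom_union_bdy (n := n) (𝔞 := 𝔞) ▸ subset_union_left

theorem isClosed_closedDom : IsClosed (closedDom n 𝔞) := by
  simp only [closedDom, ofPred_forall]
  exact isClosed_iInter fun m => isClosed_le continuous_const (by fun_prop)

theorem add_int_mem_closedDom {y : Fin n → ℝ} (hy : y ∈ closedDom n 𝔞)
    (m : Fin n → ℤ) : (fun i => y i + (m i : ℝ)) ∈ closedDom n 𝔞 := fun m' => by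
  convert hy (m' - m) using 3 with i
  push_cast [Pi.sub_apply]
  ring

theorem abs_sub_le_of_sum_sq_eq {y c : Fin n → ℝ} (h𝔞 : 0 ≤ 𝔞)
    (hy : ∑ i, (y i - c i) ^ 2 = 𝔞 ^ 2) (i : Fin n) : |y i - c i| ≤ 𝔞 :=
  abs_le_of_sq_le_sq (hy ▸ single_le_sum (fun j _ => sq_nonneg (y j - c j)) (mem_univ i)) h𝔞

theorem lt_sum_sq_sub_of_abs_sub_lt (h𝔞 : 0 ≤ 𝔞) {y : Fin n → ℝ} {m m' : Fin n → ℤ}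
    (hy : ∀ i, |y i - m i| < 1 - 𝔞) (hm : m' ≠ m) : 𝔞 ^ 2 < ∑ i, (y i - (m' i : ℝ)) ^ 2 := by
  obtain ⟨i, hi⟩ := Function.ne_iff.mp hm
  have hone : (1 : ℝ) ≤ |(m i : ℝ) - m' i| := by
    exact_mod_cast Int.one_le_abs (sub_ne_zero.mpr hi.symm)
  have hfar : 𝔞 < |y i - m' i| := by
    have := abs_sub_abs_le_abs_sub ((m i : ℝ) - m' i) (m i - y i)
    rw [abs_sub_comm (m i : ℝ) (y i)] at this
    have hsub : (m i : ℝ) - m' i - (m i - y i) = y i - m' i := by ring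
    linarith [hy i, hsub ▸ this]
  calc 𝔞 ^ 2 < (y i - m' i) ^ 2 := by
        rw [← sq_abs (y i - _)]; exact pow_lt_pow_left₀ hfar h𝔞 two_ne_zero
    _ ≤ _ := single_le_sum (fun j _ => sq_nonneg (y j - (m' j : ℝ))) (mem_univ i)

theorem mem_closedDom_of_sum_sq_eq (h𝔞 : 0 ≤ 𝔞) (h𝔞₂ : 𝔞 < 1 / 2) {y : Fin n → ℝ}
    {m : Fin n → ℤ} (hy : ∑ i, (y i - (m i : ℝ)) ^ 2 = 𝔞 ^ 2) : y ∈ closedDom n 𝔞 := by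
  intro m'
  rcases eq_or_ne m' m with rfl | hm
  · exact hy.ge
  · refine (lt_sum_sq_sub_of_abs_sub_lt h𝔞 (fun i => ?_) hm).le
    linarith [abs_sub_le_of_sum_sq_eq (c := fun i => (m i : ℝ)) h𝔞 hy i]

theorem bdy_nonempty (h𝔞 : 0 ≤ 𝔞) (h𝔞₂ : 𝔞 < 1 / 2) (hD : (Dom n 𝔞).Nonempty) :
    (Bdy n 𝔞).Nonempty := by
  obtain ⟨y, hy⟩ := hD
  have : Nonempty (Fin n) := by
    by_contra h
    have := hy 0
    simp only [not_nonempty_iff.mp h, univ_eq_empty, sum_empty] at this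
    nlinarith
  set y₀ : Fin n → ℝ := Pi.single (Classical.arbitrary (Fin n)) 𝔞
  have hsph : ∑ i, (y₀ i - ((0 : Fin n → ℤ) i : ℝ)) ^ 2 = 𝔞 ^ 2 := by
    simp [y₀, Pi.single_apply]
  exact ⟨y₀, ⟨0, hsph⟩, mem_closedDom_of_sum_sq_eq h𝔞 h𝔞₂ hsph⟩

/-- The points `y₀ + s (y₀ - m)`, `s ↓ 0`, lie in an open subset of `ℝⁿ \ T̄`, on which
`Dw = 0`. -/
theorem fderiv_eq_zero_of_forall_dom_eq (h𝔞 : 0 < 𝔞) (h𝔞₂ : 𝔞 < 1 / 2)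
    {w : (Fin n → ℝ) → ℝ} (hw : ContDiff ℝ 1 w) {c : ℝ} (hc : ∀ y ∈ Dom n 𝔞, w y = c)
    {y₀ : Fin n → ℝ} (hy₀ : y₀ ∈ Bdy n 𝔞) : fderiv ℝ w y₀ = 0 := by
  obtain ⟨m, hm⟩ := hy₀.1
  set U : Set (Fin n → ℝ) :=
    {y | 𝔞 ^ 2 < ∑ i, (y i - (m i : ℝ)) ^ 2} ∩ ⋂ i, {y | |y i - m i| < 1 - 𝔞}
  have hU_open : IsOpen U :=
    (isOpen_lt continuous_const (by fun_prop)).inter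
      (isOpen_iInter_of_finite fun i => isOpen_lt (by fun_prop) continuous_const)
  have hU_dom : U ⊆ Dom n 𝔞 := by
    rintro y ⟨hym, hy⟩ m'
    rcases eq_or_ne m' m with rfl | hm'
    · exact hym
    · refine lt_sum_sq_sub_of_abs_sub_lt h𝔞.le ?_ hm'
      simpa only [mem_iInter, mem_ofPred_eq] using hy
  have hU_zero : ∀ z ∈ U, fderiv ℝ w z = 0 := fun z hz => by
    rw [(eventuallyEq_of_mem (hU_open.mem_nhds hz) fun y hy => hc y (hU_dom hy)).fderiv_eq]
    exact fderiv_const_apply c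
  set ray : ℝ → Fin n → ℝ := fun s i => y₀ i + s * (y₀ i - m i)
  have hray : ∀ s ∈ Ioo 0 ((1 - 2 * 𝔞) / 𝔞), ray s ∈ U := by
    rintro s ⟨hs, hs'⟩
    rw [lt_div_iff₀ h𝔞] at hs'
    have hsub : ∀ i, ray s i - m i = (1 + s) * (y₀ i - m i) := fun i => by
      simp only [ray]; ring
    refine ⟨?_, mem_iInter.mpr fun i => ?_⟩
    · simp only [mem_ofPred_eq, hsub, mul_pow, ← mul_sum, hm]
      nlinarith [mul_pos (mul_pos hs h𝔞) h𝔞, sq_nonneg (s * 𝔞)]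
    · rw [mem_ofPred_eq, hsub, abs_mul, abs_of_pos (by linarith : 0 < 1 + s)]
      have := abs_sub_le_of_sum_sq_eq (c := fun i => (m i : ℝ)) h𝔞.le hm i
      nlinarith
  have htend : Tendsto ray (𝓝[>] 0) (𝓝 y₀) := by
    have : Continuous ray := by fun_prop
    simpa [ray] using (this.tendsto 0).mono_left nhdsWithin_le_nhds
  have hε : 0 < (1 - 2 * 𝔞) / 𝔞 := div_pos (by linarith) h𝔞
  exact (isClosed_eq (hw.continuous_fderiv one_ne_zero) continuous_const).mem_of_tendsto htend
    (eventually_of_mem (Ioo_mem_nhdsGT hε) fun s hs => hU_zero _ (hray s hs))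

end Geometry

section Sphere

variable {𝔞 μ : ℝ} {w : (Fin n → ℝ) → ℝ} {w' : (Fin n → ℝ) →L[ℝ] ℝ} {c y₀ : Fin n → ℝ}

theorem hasStrictFDerivAt_sum_sq_sub (c y₀ : Fin n → ℝ) :
    HasStrictFDerivAt (fun y => ∑ i, (y i - c i) ^ 2)
      (∑ i, (2 * (y₀ i - c i)) • ContinuousLinearMap.proj (R := ℝ) (φ := fun _ : Fin n => ℝ) i)
      y₀ := by
  refine HasStrictFDerivAt.fun_sum fun i _ => ?_
  refine (((hasStrictFDerivAt_apply i y₀).sub_const (c i)).pow 2).congr_fderiv ?_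
  ext u
  simp

theorem exists_fderiv_eq_mul_of_isLocalMaxOn_sphere (hw : HasStrictFDerivAt w w' y₀)
    (hmax : IsLocalMaxOn w {y | ∑ i, (y i - c i) ^ 2 = ∑ i, (y₀ i - c i) ^ 2} y₀)
    (hy₀ : y₀ ≠ c) : ∃ s : ℝ, ∀ i, w' (Pi.single i 1) = s * (y₀ i - c i) := by
  obtain ⟨α, β, hαβ, h⟩ :=
    IsLocalExtrOn.exists_multipliers_of_hasStrictFDerivAt_1d (Or.inr hmax)
      (hasStrictFDerivAt_sum_sq_sub c y₀) hw
  have h_single : ∀ i, α * (2 * (y₀ i - c i)) + β * w' (Pi.single i 1) = 0 := fun i => by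
    simpa [Pi.single_apply] using congrArg (· (Pi.single i (1 : ℝ))) h
  have hβ : β ≠ 0 := by
    rintro rfl
    have hα : α ≠ 0 := fun hα => hαβ (by simp [hα])
    exact hy₀ (funext fun i => by simpa [hα, sub_eq_zero] using h_single i)
  exact ⟨-2 * α / β, fun i => by field_simp; linarith [h_single i]⟩

/-- By Lagrange multipliers the gradient at `y₀` is normal to the sphere, hence a multiple of the
unit normal `ν = (c - y₀) / 𝔞`, and the multiple is positive by `hnormal`. -/
theorem sum_mul_fderiv_pos_of_isLocalMaxOn_sphere {β : Fin n → ℝ}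
    (hw : HasStrictFDerivAt w w' y₀) (h𝔞 : 0 < 𝔞) (hy₀ : ∑ i, (y₀ i - c i) ^ 2 = 𝔞 ^ 2)
    (hmax : IsLocalMaxOn w {y | ∑ i, (y i - c i) ^ 2 = 𝔞 ^ 2} y₀)
    (hnormal : 0 < ∑ i, w' (Pi.single i 1) * ((c i - y₀ i) / 𝔞))
    (hobl : μ ≤ ∑ i, β i * ((c i - y₀ i) / 𝔞)) (hμ : 0 < μ) :
    0 < ∑ i, β i * w' (Pi.single i 1) := by
  have hne : y₀ ≠ c := by
    rintro rfl
    simp only [sub_self, ne_eq, OfNat.ofNat_ne_zero, not_false_eq_true, zero_pow, sum_const_zero]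
      at hy₀
    nlinarith
  obtain ⟨s, hs⟩ := exists_fderiv_eq_mul_of_isLocalMaxOn_sphere hw (hy₀ ▸ hmax) hne
  have hnormal_eq : ∑ i, w' (Pi.single i 1) * ((c i - y₀ i) / 𝔞) = -s * 𝔞 := by
    have : ∑ i, w' (Pi.single i 1) * ((c i - y₀ i) / 𝔞) = -s / 𝔞 * ∑ i, (y₀ i - c i) ^ 2 := by
      rw [mul_sum]
      exact sum_congr rfl fun i _ => by rw [hs]; ring
    rw [this, hy₀]
    field_simp
  have hobl_eq : ∑ i, β i * w' (Pi.single i 1) = -s * 𝔞 * ∑ i, β i * ((c i - y₀ i) / 𝔞) := by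
    rw [mul_sum]
    exact sum_congr rfl fun i _ => by rw [hs]; field_simp; ring
  rw [hobl_eq]
  exact mul_pos (hnormal_eq ▸ hnormal) (hμ.trans_le hobl)

end Sphere

section Comparison

variable {𝔞 μ : ℝ} {a : (Fin n → ℝ) → Fin n → Fin n → ℝ} {b : (Fin n → ℝ) → Fin n → ℝ}
  {v₁ v₂ : (Fin n → ℝ) → ℝ}

theorem sd_sub (h₁ : ContDiff ℝ 2 v₁) (h₂ : ContDiff ℝ 2 v₂) (y : Fin n → ℝ) (i j : Fin n) :
    sd (v₁ - v₂) y i j = sd v₁ y i j - sd v₂ y i j := by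
  have hd : ∀ {v : (Fin n → ℝ) → ℝ}, ContDiff ℝ 2 v →
      Differentiable ℝ fun z => fderiv ℝ v z (Pi.single j 1) := fun hv =>
    ((hv.fderiv_right (m := 1) (by norm_num)).clm_apply contDiff_const).differentiable
      one_ne_zero
  have hsub : (fun z => fderiv ℝ (v₁ - v₂) z (Pi.single j 1))
      = fun z => fderiv ℝ v₁ z (Pi.single j 1) - fderiv ℝ v₂ z (Pi.single j 1) := funext fun z => by
    rw [fderiv_sub (h₁.differentiable two_ne_zero z) (h₂.differentiable two_ne_zero z)]
    rfl
  unfold sd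
  rw [hsub, fderiv_fun_sub (hd h₁ y) (hd h₂ y)]
  rfl

theorem sum_mul_fderiv_sub_eq {y : Fin n → ℝ} (h₁ : DifferentiableAt ℝ v₁ y)
    (h₂ : DifferentiableAt ℝ v₂ y) {β ξ : Fin n → ℝ} {γ₁ γ₂ G : ℝ}
    (hbc₁ : ∑ i, β i * (ξ i + fderiv ℝ v₁ y (Pi.single i 1)) + γ₁ = G)
    (hbc₂ : ∑ i, β i * (ξ i + fderiv ℝ v₂ y (Pi.single i 1)) + γ₂ = G) :
    ∑ i, β i * fderiv ℝ (v₁ - v₂) y (Pi.single i 1) = γ₂ - γ₁ := by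
  have : ∑ i, β i * fderiv ℝ (v₁ - v₂) y (Pi.single i 1)
      = ∑ i, β i * (ξ i + fderiv ℝ v₁ y (Pi.single i 1))
        - ∑ i, β i * (ξ i + fderiv ℝ v₂ y (Pi.single i 1)) := by
    rw [← sum_sub_distrib, fderiv_sub h₁ h₂]
    exact sum_congr rfl fun i _ => by simp only [sub_apply]; ring
  linarith

theorem oblique_deriv_pos_of_nonconst (h𝔞 : 0 < 𝔞) (h𝔞₂ : 𝔞 < 1 / 2) (hμ : 0 < μ)
    (hobl : ∀ y ∈ Bdy n 𝔞, ∀ m : Fin n → ℤ, (∑ i, (y i - (m i : ℝ)) ^ 2) = 𝔞 ^ 2 →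
      μ ≤ ∑ i, b y i * (((m i : ℝ) - y i) / 𝔞))
    {w : (Fin n → ℝ) → ℝ} (hw : ContDiff ℝ 1 w) (hper : IntPeriodic w)
    (hSMP : ∀ y₀ ∈ Dom n 𝔞, (∀ y ∈ Dom n 𝔞, w y ≤ w y₀) → ∀ y ∈ Dom n 𝔞, w y = w y₀)
    (hHopf : ∀ y₀ ∈ Bdy n 𝔞, (∀ y ∈ Dom n 𝔞 ∪ Bdy n 𝔞, w y ≤ w y₀) →
      (¬ ∀ y ∈ Dom n 𝔞, w y = w y₀) → ∀ m : Fin n → ℤ, (∑ i, (y₀ i - (m i : ℝ)) ^ 2) = 𝔞 ^ 2 →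
      0 < ∑ i, fderiv ℝ w y₀ (Pi.single i 1) * (((m i : ℝ) - y₀ i) / 𝔞))
    (hnc : ∀ c, ∃ y ∈ Dom n 𝔞, w y ≠ c) {δ : ℝ}
    (hδ : ∀ y ∈ Bdy n 𝔞, ∑ i, b y i * fderiv ℝ w y (Pi.single i 1) = δ) : 0 < δ := by
  obtain ⟨y, hy, -⟩ := hnc 0
  obtain ⟨y₀, hy₀, hmax⟩ := hper.exists_isMaxOn isClosed_closedDom
    (fun _ hy => add_int_mem_closedDom hy) ⟨y, dom_subset_closedDom hy⟩ hw.continuous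
  have hnc₀ : ¬ ∀ y ∈ Dom n 𝔞, w y = w y₀ := fun h => by
    obtain ⟨y, hy, hne⟩ := hnc (w y₀)
    exact hne (h y hy)
  rw [← dom_union_bdy] at hy₀ hmax
  obtain hy₀ | hy₀ := hy₀
  · exact absurd (hSMP y₀ hy₀ fun y hy => hmax (Or.inl hy)) hnc₀
  obtain ⟨m, hm⟩ := hy₀.1
  have hsphere : {y | ∑ i, (y i - (m i : ℝ)) ^ 2 = 𝔞 ^ 2} ⊆ Dom n 𝔞 ∪ Bdy n 𝔞 :=
    fun y hy => dom_union_bdy ▸ mem_closedDom_of_sum_sq_eq h𝔞.le h𝔞₂ hy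
  rw [← hδ y₀ hy₀]
  exact sum_mul_fderiv_pos_of_isLocalMaxOn_sphere (c := fun i => (m i : ℝ))
    (hw.hasStrictFDerivAt one_ne_zero) h𝔞 hm (hmax.on_subset hsphere).localize
    (hHopf y₀ hy₀ (isMaxOn_iff.mp hmax) hnc₀ m hm) (hobl y₀ hy₀ m hm) hμ

theorem lt_of_sub_nonconst (h𝔞 : 0 < 𝔞) (h𝔞₂ : 𝔞 < 1 / 2) (hμ : 0 < μ)
    (hobl : ∀ y ∈ Bdy n 𝔞, ∀ m : Fin n → ℤ, (∑ i, (y i - (m i : ℝ)) ^ 2) = 𝔞 ^ 2 →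
      μ ≤ ∑ i, b y i * (((m i : ℝ) - y i) / 𝔞))
    {f g : (Fin n → ℝ) → ℝ} {ξ : Fin n → ℝ} {γ₁ γ₂ : ℝ}
    (h₁ : ContDiff ℝ 2 v₁) (h₂ : ContDiff ℝ 2 v₂) (hper₁ : IntPeriodic v₁)
    (hper₂ : IntPeriodic v₂)
    (hint₁ : ∀ y ∈ Dom n 𝔞, (∑ i, ∑ j, a y i j * sd v₁ y i j) = f y)
    (hint₂ : ∀ y ∈ Dom n 𝔞, (∑ i, ∑ j, a y i j * sd v₂ y i j) = f y)
    (hbc₁ : ∀ y ∈ Bdy n 𝔞, (∑ i, b y i * (ξ i + fderiv ℝ v₁ y (Pi.single i 1))) + γ₁ = g y)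
    (hbc₂ : ∀ y ∈ Bdy n 𝔞, (∑ i, b y i * (ξ i + fderiv ℝ v₂ y (Pi.single i 1))) + γ₂ = g y)
    (hSMP : ∀ w : (Fin n → ℝ) → ℝ, ContDiff ℝ 2 w → IntPeriodic w →
      (∀ y ∈ Dom n 𝔞, (∑ i, ∑ j, a y i j * sd w y i j) = 0) →
      ∀ y₀ ∈ Dom n 𝔞, (∀ y ∈ Dom n 𝔞, w y ≤ w y₀) → ∀ y ∈ Dom n 𝔞, w y = w y₀)
    (hHopf : ∀ w : (Fin n → ℝ) → ℝ, ContDiff ℝ 2 w → IntPeriodic w →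
      (∀ y ∈ Dom n 𝔞, (∑ i, ∑ j, a y i j * sd w y i j) = 0) →
      ∀ y₀ ∈ Bdy n 𝔞, (∀ y ∈ Dom n 𝔞 ∪ Bdy n 𝔞, w y ≤ w y₀) →
      (¬ ∀ y ∈ Dom n 𝔞, w y = w y₀) →
      ∀ m : Fin n → ℤ, (∑ i, (y₀ i - (m i : ℝ)) ^ 2) = 𝔞 ^ 2 →
      0 < ∑ i, fderiv ℝ w y₀ (Pi.single i 1) * (((m i : ℝ) - y₀ i) / 𝔞))
    (hnc : ∀ c, ∃ y ∈ Dom n 𝔞, v₁ y - v₂ y ≠ c) : γ₁ < γ₂ := by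
  have hw := h₁.sub h₂
  have hper := hper₁.sub hper₂
  have hsol : ∀ y ∈ Dom n 𝔞, (∑ i, ∑ j, a y i j * sd (v₁ - v₂) y i j) = 0 := fun y hy => by
    simp only [sd_sub h₁ h₂, mul_sub, sum_sub_distrib, hint₁ y hy, hint₂ y hy, sub_self]
  refine sub_pos.mp (oblique_deriv_pos_of_nonconst h𝔞 h𝔞₂ hμ hobl (hw.of_le one_le_two) hper
    (hSMP _ hw hper hsol) (hHopf _ hw hper hsol) hnc fun y hy => ?_)
  exact sum_mul_fderiv_sub_eq (h₁.differentiable two_ne_zero y) (h₂.differentiable two_ne_zero y)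
    (hbc₁ y hy) (hbc₂ y hy)

end Comparison

theorem stmt3_general (n : ℕ) (𝔞 μ : ℝ) (ha : 0 < 𝔞) (ha2 : 𝔞 < 1 / 2) (hμ : 0 < μ)
    (a : (Fin n → ℝ) → Fin n → Fin n → ℝ) (b : (Fin n → ℝ) → (Fin n → ℝ))
    (f g : (Fin n → ℝ) → ℝ) (ξ : Fin n → ℝ)
    (hobl : ∀ y ∈ Bdy n 𝔞, ∀ m : Fin n → ℤ,
      (∑ i, (y i - (m i : ℝ)) ^ 2) = 𝔞 ^ 2 →
      μ ≤ ∑ i, b y i * (((m i : ℝ) - y i) / 𝔞))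
    (hconn : IsConnected (Dom n 𝔞))
    (v1 v2 : (Fin n → ℝ) → ℝ) (γ1 γ2 : ℝ)
    (hC1 : ContDiff ℝ 2 v1) (hC2 : ContDiff ℝ 2 v2)
    (hper1 : ∀ (m : Fin n → ℤ) (y : Fin n → ℝ), v1 (fun i => y i + (m i : ℝ)) = v1 y)
    (hper2 : ∀ (m : Fin n → ℤ) (y : Fin n → ℝ), v2 (fun i => y i + (m i : ℝ)) = v2 y)
    (hint1 : ∀ y ∈ Dom n 𝔞, (∑ i, ∑ j, a y i j * sd v1 y i j) = f y)
    (hint2 : ∀ y ∈ Dom n 𝔞, (∑ i, ∑ j, a y i j * sd v2 y i j) = f y)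
    (hbc1 : ∀ y ∈ Bdy n 𝔞,
      (∑ i, b y i * (ξ i + fderiv ℝ v1 y (Pi.single i (1 : ℝ)))) + γ1 = g y)
    (hbc2 : ∀ y ∈ Bdy n 𝔞,
      (∑ i, b y i * (ξ i + fderiv ℝ v2 y (Pi.single i (1 : ℝ)))) + γ2 = g y)
    -- strong maximum principle for a_{ij}D_{ij} on the periodic perforated domain
    (hSMP : ∀ w : (Fin n → ℝ) → ℝ, ContDiff ℝ 2 w →
      (∀ (m : Fin n → ℤ) (y : Fin n → ℝ), w (fun i => y i + (m i : ℝ)) = w y) →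
      (∀ y ∈ Dom n 𝔞, (∑ i, ∑ j, a y i j * sd w y i j) = 0) →
      ∀ y₀ ∈ Dom n 𝔞, (∀ y ∈ Dom n 𝔞, w y ≤ w y₀) → ∀ y ∈ Dom n 𝔞, w y = w y₀)
    -- Hopf boundary lemma for a_{ij}D_{ij} at boundary maximum points
    (hHopf : ∀ w : (Fin n → ℝ) → ℝ, ContDiff ℝ 2 w →
      (∀ (m : Fin n → ℤ) (y : Fin n → ℝ), w (fun i => y i + (m i : ℝ)) = w y) →
      (∀ y ∈ Dom n 𝔞, (∑ i, ∑ j, a y i j * sd w y i j) = 0) →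
      ∀ y₀ ∈ Bdy n 𝔞, (∀ y ∈ Dom n 𝔞 ∪ Bdy n 𝔞, w y ≤ w y₀) →
      (¬ ∀ y ∈ Dom n 𝔞, w y = w y₀) →
      ∀ m : Fin n → ℤ, (∑ i, (y₀ i - (m i : ℝ)) ^ 2) = 𝔞 ^ 2 →
      0 < ∑ i, fderiv ℝ w y₀ (Pi.single i (1 : ℝ)) * (((m i : ℝ) - y₀ i) / 𝔞)) :
    γ1 = γ2 := by
  by_cases hc : ∃ c, ∀ y ∈ Dom n 𝔞, v1 y - v2 y = c
  · obtain ⟨c, hc⟩ := hc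
    obtain ⟨y₀, hy₀⟩ := bdy_nonempty ha.le ha2 hconn.nonempty
    have hbw := sum_mul_fderiv_sub_eq (hC1.differentiable two_ne_zero y₀)
      (hC2.differentiable two_ne_zero y₀) (hbc1 y₀ hy₀) (hbc2 y₀ hy₀)
    rw [fderiv_eq_zero_of_forall_dom_eq (w := v1 - v2) ha ha2 ((hC1.sub hC2).of_le one_le_two) hc
      hy₀] at hbw
    simp only [zero_apply, mul_zero, sum_const_zero] at hbw
    linarith
  · push Not at hc
    have h₁₂ := lt_of_sub_nonconst ha ha2 hμ hobl hC1 hC2 hper1 hper2 hint1 hint2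
      hbc1 hbc2 hSMP hHopf hc
    have h₂₁ := lt_of_sub_nonconst ha ha2 hμ hobl hC2 hC1 hper2 hper1 hint2 hint1
      hbc2 hbc1 hSMP hHopf fun c => by
        obtain ⟨y, hy, hne⟩ := hc (-c)
        exact ⟨y, hy, fun h => hne (by linarith)⟩
    exact absurd h₁₂ h₂₁.not_gt

/-- Uniqueness of the compatibility constant (comparison form).  If `v¹, v²` are bounded
`C²` periodic solutions of `a_{ij}D_{ij}v = f` in `ℝⁿ \ T`,
`b·(ξ + Dv) + γ^k = g` on `∂T`, where `a` is uniformly elliptic, `b` is uniformly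
oblique, `ℝⁿ \ T̄` is connected, and the strong maximum principle and Hopf boundary
lemma hold for the operator `a_{ij}D_{ij}`, then `γ¹ = γ²`. -/
theorem stmt3 (n : ℕ) (𝔞 lam Lam μ : ℝ) (ha : 0 < 𝔞) (ha2 : 𝔞 < 1 / 2)
    (hlam : 0 < lam) (hLL : lam ≤ Lam) (hμ : 0 < μ)
    (a : (Fin n → ℝ) → Fin n → Fin n → ℝ) (b : (Fin n → ℝ) → (Fin n → ℝ))
    (f g : (Fin n → ℝ) → ℝ) (ξ : Fin n → ℝ)
    (hell : ∀ (y ξ' : Fin n → ℝ),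
      lam * ∑ i, ξ' i ^ 2 ≤ (∑ i, ∑ j, a y i j * ξ' i * ξ' j) ∧
      (∑ i, ∑ j, a y i j * ξ' i * ξ' j) ≤ Lam * ∑ i, ξ' i ^ 2)
    (hobl : ∀ y ∈ Bdy n 𝔞, ∀ m : Fin n → ℤ,
      (∑ i, (y i - (m i : ℝ)) ^ 2) = 𝔞 ^ 2 →
      μ ≤ ∑ i, b y i * (((m i : ℝ) - y i) / 𝔞))
    (hconn : IsConnected (Dom n 𝔞))
    (v1 v2 : (Fin n → ℝ) → ℝ) (γ1 γ2 : ℝ)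
    (hC1 : ContDiff ℝ 2 v1) (hC2 : ContDiff ℝ 2 v2)
    (hbd1 : ∃ C, ∀ y, |v1 y| ≤ C) (hbd2 : ∃ C, ∀ y, |v2 y| ≤ C)
    (hper1 : ∀ (m : Fin n → ℤ) (y : Fin n → ℝ), v1 (fun i => y i + (m i : ℝ)) = v1 y)
    (hper2 : ∀ (m : Fin n → ℤ) (y : Fin n → ℝ), v2 (fun i => y i + (m i : ℝ)) = v2 y)
    (hint1 : ∀ y ∈ Dom n 𝔞, (∑ i, ∑ j, a y i j * sd v1 y i j) = f y)
    (hint2 : ∀ y ∈ Dom n 𝔞, (∑ i, ∑ j, a y i j * sd v2 y i j) = f y)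
    (hbc1 : ∀ y ∈ Bdy n 𝔞,
      (∑ i, b y i * (ξ i + fderiv ℝ v1 y (Pi.single i (1 : ℝ)))) + γ1 = g y)
    (hbc2 : ∀ y ∈ Bdy n 𝔞,
      (∑ i, b y i * (ξ i + fderiv ℝ v2 y (Pi.single i (1 : ℝ)))) + γ2 = g y)
    -- strong maximum principle for a_{ij}D_{ij} on the periodic perforated domain
    (hSMP : ∀ w : (Fin n → ℝ) → ℝ, ContDiff ℝ 2 w →
      (∀ (m : Fin n → ℤ) (y : Fin n → ℝ), w (fun i => y i + (m i : ℝ)) = w y) →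
      (∀ y ∈ Dom n 𝔞, (∑ i, ∑ j, a y i j * sd w y i j) = 0) →
      ∀ y₀ ∈ Dom n 𝔞, (∀ y ∈ Dom n 𝔞, w y ≤ w y₀) → ∀ y ∈ Dom n 𝔞, w y = w y₀)
    -- Hopf boundary lemma for a_{ij}D_{ij} at boundary maximum points
    (hHopf : ∀ w : (Fin n → ℝ) → ℝ, ContDiff ℝ 2 w →
      (∀ (m : Fin n → ℤ) (y : Fin n → ℝ), w (fun i => y i + (m i : ℝ)) = w y) →
      (∀ y ∈ Dom n 𝔞, (∑ i, ∑ j, a y i j * sd w y i j) = 0) →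
      ∀ y₀ ∈ Bdy n 𝔞, (∀ y ∈ Dom n 𝔞 ∪ Bdy n 𝔞, w y ≤ w y₀) →
      (¬ ∀ y ∈ Dom n 𝔞, w y = w y₀) →
      ∀ m : Fin n → ℤ, (∑ i, (y₀ i - (m i : ℝ)) ^ 2) = 𝔞 ^ 2 →
      0 < ∑ i, fderiv ℝ w y₀ (Pi.single i (1 : ℝ)) * (((m i : ℝ) - y₀ i) / 𝔞)) :
    γ1 = γ2 :=
  stmt3_general n 𝔞 μ ha ha2 hμ a b f g ξ hobl hconn v1 v2 γ1 γ2 hC1 hC2 hper1 hper2 hint1 hint2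
    hbc1 hbc2 hSMP hHopf
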